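/- arXiv:2009.02640 — 4 statements merged into one kernel-verified Lean document; each statement's English description precedes it below -/
import Mathlib

section
/- Let p_1 < p_2 < ... be the primes in increasing order, and for n ≥ 0 define the partial Euler product Q_n(s) = ∏_{k=1}^{n} (1 - p_k^{-s})^{-1} (with Q_0(s) = 1). Then for every n ≥ 0, the limit as real s → ∞ of (1 - Q_n(s)/ζ(s))^{-1/s} equals p_{n+1}. -/
open Filter Topology

noncomputable def realZeta (s : ℝ) : ℝ := ∑' n : ℕ, ((n : ℝ) + 1) ^ (-s)

/-- `nthPrime k` is the `(k+1)`-st prime, i.e. `p_{k+1}`; so `nthPrime 0 = 2`. -/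
noncomputable def nthPrime (k : ℕ) : ℕ := Nat.nth Nat.Prime k

/-- Partial Euler product `Q_n(s) = ∏_{k=1}^n (1 - p_k^{-s})⁻¹`. -/
noncomputable def Qpartial (n : ℕ) (s : ℝ) : ℝ :=
  ∏ k ∈ Finset.range n, (1 - ((nthPrime k : ℝ)) ^ (-s))⁻¹

/-!
Every positive integer is either `p_{n+1}`-smooth or has a prime factor `≥ p_{n+1}`, and by the
Euler product the smooth ones contribute exactly `Q_n(s)` to `ζ(s)`. Hence `1 - Q_n(s)/ζ(s)` is the
sum of `m^{-s}` over the non-smooth `m`, divided by `ζ(s)`. That sum contains `p_{n+1}^{-s}` and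
is at most `p_{n+1}^{2-s} ζ(2)`, since every non-smooth `m` is at least `p_{n+1}`; as `ζ(s)` stays
in `[1, ζ(2)]`, the quantity is squeezed between two constant multiples of `p_{n+1}^{-s}`, and
taking the power `-1/s` kills the constants.
-/

lemma tendsto_const_rpow_neg_one_div {c : ℝ} (hc : 0 < c) :
    Tendsto (fun s : ℝ => c ^ (-1 / s)) atTop (𝓝 1) := by
  have h : Tendsto (fun s : ℝ => -1 / s) atTop (𝓝 0) := tendsto_const_nhds.div_atTop tendsto_id
  simpa [Function.comp_def] using (Real.continuousAt_const_rpow hc.ne').tendsto.comp h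

lemma mul_rpow_neg_rpow_neg_one_div {c p s : ℝ} (hc : 0 ≤ c) (hp : 0 ≤ p) (hs : s ≠ 0) :
    (c * p ^ (-s)) ^ (-1 / s) = c ^ (-1 / s) * p := by
  rw [Real.mul_rpow hc (Real.rpow_nonneg hp _), ← Real.rpow_mul hp,
    show -s * (-1 / s) = 1 by field_simp, Real.rpow_one]

lemma tendsto_rpow_neg_one_div_of_le_of_le {f : ℝ → ℝ} {c C p : ℝ} (hc : 0 < c) (hp : 0 < p)
    (hlo : ∀ᶠ s in atTop, c * p ^ (-s) ≤ f s) (hhi : ∀ᶠ s in atTop, f s ≤ C * p ^ (-s)) :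
    Tendsto (fun s => f s ^ (-1 / s)) atTop (𝓝 p) := by
  obtain ⟨s, hlo_s, hhi_s⟩ := (hlo.and hhi).exists
  have hC : 0 < C :=
    hc.trans_le (le_of_mul_le_mul_right (hlo_s.trans hhi_s) (Real.rpow_pos_of_pos hp _))
  have hlim {d : ℝ} (hd : 0 < d) :
      Tendsto (fun s : ℝ => (d * p ^ (-s)) ^ (-1 / s)) atTop (𝓝 p) := by
    have h : Tendsto (fun s : ℝ => d ^ (-1 / s) * p) atTop (𝓝 p) := by
      simpa using (tendsto_const_rpow_neg_one_div hd).mul_const p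
    refine h.congr' ?_
    filter_upwards [eventually_gt_atTop 0] with s hs
    rw [mul_rpow_neg_rpow_neg_one_div hd.le hp.le hs.ne']
  have hexp : ∀ᶠ s : ℝ in atTop, -1 / s ≤ 0 := by
    filter_upwards [eventually_gt_atTop 0] with s hs
    exact div_nonpos_of_nonpos_of_nonneg (by norm_num) hs.le
  refine tendsto_of_tendsto_of_tendsto_of_le_of_le' (hlim hC) (hlim hc) ?_ ?_
  · filter_upwards [hlo, hhi, hexp] with s hlo hhi hexp
    have hf : 0 < f s := (by positivity : 0 < c * p ^ (-s)).trans_le hlo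
    exact Real.rpow_le_rpow_of_nonpos hf hhi hexp
  · filter_upwards [hlo, hexp] with s hlo hexp
    exact Real.rpow_le_rpow_of_nonpos (by positivity) hlo hexp

noncomputable def natRpowNegHom (s : ℝ) : ℕ →* ℝ where
  toFun m := (m : ℝ) ^ (-s)
  map_one' := by simp
  map_mul' m k := by
    push_cast
    exact Real.mul_rpow (by positivity) (by positivity)

lemma summable_nat_rpow_neg {s : ℝ} (hs : 1 < s) : Summable fun m : ℕ => (m : ℝ) ^ (-s) :=
  Real.summable_nat_rpow.mpr (by linarith)

lemma summable_nat_add_one_rpow_neg {s : ℝ} (hs : 1 < s) :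
    Summable fun m : ℕ => ((m : ℝ) + 1) ^ (-s) := by
  simpa using (summable_nat_add_iff 1).mpr (summable_nat_rpow_neg hs)

lemma realZeta_eq_tsum {s : ℝ} (hs : 1 < s) : realZeta s = ∑' m : ℕ, (m : ℝ) ^ (-s) := by
  rw [(summable_nat_rpow_neg hs).tsum_eq_zero_add]
  simp [realZeta, Real.zero_rpow (by linarith : -s ≠ 0)]

lemma one_le_realZeta {s : ℝ} (hs : 1 < s) : 1 ≤ realZeta s := by
  simpa [realZeta] using (summable_nat_add_one_rpow_neg hs).le_tsum 0 (fun m _ => by positivity)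

lemma realZeta_le_realZeta {s t : ℝ} (ht : 1 < t) (hts : t ≤ s) : realZeta s ≤ realZeta t :=
  Summable.tsum_le_tsum
    (fun m => Real.rpow_le_rpow_of_exponent_le (by simp) (by linarith))
    (summable_nat_add_one_rpow_neg (ht.trans_le hts)) (summable_nat_add_one_rpow_neg ht)

lemma Nat.filter_range_nth_eq_image {p : ℕ → Prop} [DecidablePred p]
    (hp : (Set.ofPred p).Infinite) (n : ℕ) :
    {m ∈ Finset.range (nth p n) | p m} = (Finset.range n).image (nth p) := by
  ext m
  simp only [Finset.mem_filter, Finset.mem_image, Finset.mem_range]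
  constructor
  · rintro ⟨hlt, hm⟩
    refine ⟨count p m, ?_, nth_count hm⟩
    rwa [← nth_lt_nth hp, nth_count hm]
  · rintro ⟨k, hk, rfl⟩
    exact ⟨(nth_lt_nth hp).2 hk, nth_mem_of_infinite hp k⟩

lemma Qpartial_eq_tsum_smoothNumbers (n : ℕ) {s : ℝ} (hs : 1 < s) :
    Qpartial n s = ∑' m : (nthPrime n).smoothNumbers, (m : ℝ) ^ (-s) := by
  change _ = ∑' m : (nthPrime n).smoothNumbers, natRpowNegHom s m
  rw [← EulerProduct.prod_primesBelow_geometric_eq_tsum_smoothNumbers (f := natRpowNegHom s)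
      (summable_nat_rpow_neg hs),
    Nat.primesBelow, nthPrime, Nat.filter_range_nth_eq_image Nat.infinite_setOfPred_prime,
    Finset.prod_image fun a _ b _ h => Nat.nth_injective Nat.infinite_setOfPred_prime h]
  rfl

lemma realZeta_eq_Qpartial_add (n : ℕ) {s : ℝ} (hs : 1 < s) :
    realZeta s = Qpartial n s + ∑' m : ↥(nthPrime n).smoothNumbersᶜ, (m : ℝ) ^ (-s) := by
  rw [realZeta_eq_tsum hs, Qpartial_eq_tsum_smoothNumbers n hs]
  exact ((summable_nat_rpow_neg hs).tsum_subtype_add_tsum_subtype_compl _).symm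

lemma rpow_neg_le_tsum_compl_smoothNumbers {p : ℕ} (hp : p.Prime) {s : ℝ} (hs : 1 < s) :
    (p : ℝ) ^ (-s) ≤ ∑' m : ↥p.smoothNumbersᶜ, (m : ℝ) ^ (-s) := by
  have hmem : p ∈ p.smoothNumbersᶜ := fun h =>
    (lt_irrefl p) (Nat.mem_smoothNumbers'.mp h p hp dvd_rfl)
  exact ((summable_nat_rpow_neg hs).subtype _).le_tsum ⟨p, hmem⟩ fun _ _ =>
    Real.rpow_nonneg (Nat.cast_nonneg _) _

/-- Non-smooth numbers are at least `N`, so `m ^ (-s) ≤ N ^ (t - s) * m ^ (-t)` on them. -/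
lemma tsum_compl_smoothNumbers_le {N : ℕ} (hN : 0 < N) {s t : ℝ} (ht : 1 < t) (hts : t ≤ s) :
    ∑' m : ↥N.smoothNumbersᶜ, (m : ℝ) ^ (-s) ≤ (N : ℝ) ^ (t - s) * realZeta t := by
  have hs : 1 < s := ht.trans_le hts
  have hterm (m : ↥N.smoothNumbersᶜ) :
      (m : ℝ) ^ (-s) ≤ (N : ℝ) ^ (t - s) * (m : ℝ) ^ (-t) := by
    rcases eq_or_ne (m : ℕ) 0 with hm | hm
    · simp [hm, Real.zero_rpow (by linarith : -s ≠ 0), Real.zero_rpow (by linarith : -t ≠ 0)]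
    have hNm : N ≤ (m : ℕ) := Nat.smoothNumbers_compl N ⟨m.2, hm⟩
    have hm_pos : (0 : ℝ) < m := by positivity
    calc (m : ℝ) ^ (-s) = (m : ℝ) ^ (t - s) * (m : ℝ) ^ (-t) := by
          rw [← Real.rpow_add hm_pos]; ring_nf
      _ ≤ (N : ℝ) ^ (t - s) * (m : ℝ) ^ (-t) := by
          gcongr ?_ * _
          exact Real.rpow_le_rpow_of_nonpos (by exact_mod_cast hN) (by exact_mod_cast hNm)
            (by linarith)
  calc ∑' m : ↥N.smoothNumbersᶜ, (m : ℝ) ^ (-s)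
      ≤ ∑' m : ↥N.smoothNumbersᶜ, (N : ℝ) ^ (t - s) * (m : ℝ) ^ (-t) :=
        Summable.tsum_le_tsum hterm ((summable_nat_rpow_neg hs).subtype _)
          (((summable_nat_rpow_neg ht).subtype _).mul_left _)
    _ ≤ (N : ℝ) ^ (t - s) * ∑' m : ℕ, (m : ℝ) ^ (-t) := by
        rw [tsum_mul_left]
        gcongr
        exact (summable_nat_rpow_neg ht).tsum_subtype_le _ _ fun _ =>
          Real.rpow_nonneg (Nat.cast_nonneg _) _
    _ = (N : ℝ) ^ (t - s) * realZeta t := by rw [realZeta_eq_tsum ht]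

section Bounds

variable (n : ℕ) {s t : ℝ}

lemma one_sub_Qpartial_div_realZeta (hs : 1 < s) :
    1 - Qpartial n s / realZeta s
      = (∑' m : ↥(nthPrime n).smoothNumbersᶜ, (m : ℝ) ^ (-s)) / realZeta s := by
  have hζ : realZeta s ≠ 0 := (one_pos.trans_le (one_le_realZeta hs)).ne'
  rw [eq_div_iff hζ, sub_mul, div_mul_cancel₀ _ hζ, one_mul, realZeta_eq_Qpartial_add n hs]
  ring

lemma inv_realZeta_mul_le_one_sub_Qpartial_div_realZeta (ht : 1 < t) (hts : t ≤ s) :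
    (realZeta t)⁻¹ * (nthPrime n : ℝ) ^ (-s) ≤ 1 - Qpartial n s / realZeta s := by
  have hs : 1 < s := ht.trans_le hts
  rw [one_sub_Qpartial_div_realZeta n hs, inv_mul_eq_div]
  gcongr ?_ / ?_
  · exact one_pos.trans_le (one_le_realZeta hs)
  · exact rpow_neg_le_tsum_compl_smoothNumbers (Nat.prime_nth_prime n) hs
  · exact realZeta_le_realZeta ht hts

lemma one_sub_Qpartial_div_realZeta_le (ht : 1 < t) (hts : t ≤ s) :
    1 - Qpartial n s / realZeta s
      ≤ realZeta t * (nthPrime n : ℝ) ^ t * (nthPrime n : ℝ) ^ (-s) := by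
  have hs : 1 < s := ht.trans_le hts
  have hp : 0 < nthPrime n := (Nat.prime_nth_prime n).pos
  have htail_nonneg : 0 ≤ ∑' m : ↥(nthPrime n).smoothNumbersᶜ, (m : ℝ) ^ (-s) :=
    tsum_nonneg fun _ => by positivity
  rw [one_sub_Qpartial_div_realZeta n hs, mul_assoc, ← Real.rpow_add (by exact_mod_cast hp),
    ← sub_eq_add_neg, mul_comm]
  exact (div_le_self htail_nonneg (one_le_realZeta hs)).trans
    (tsum_compl_smoothNumbers_le hp ht hts)

end Bounds

theorem stmt1 (n : ℕ) :
    Tendsto (fun s : ℝ => (1 - Qpartial n s / realZeta s) ^ (-1 / s)) atTop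
      (𝓝 (nthPrime n : ℝ)) := by
  have hζ2 : 0 < realZeta 2 := one_pos.trans_le (one_le_realZeta one_lt_two)
  have hp : (0 : ℝ) < nthPrime n := by exact_mod_cast (Nat.prime_nth_prime n).pos
  refine tendsto_rpow_neg_one_div_of_le_of_le (C := realZeta 2 * (nthPrime n : ℝ) ^ (2 : ℝ))
    (inv_pos.mpr hζ2) hp ?_ ?_
  · filter_upwards [eventually_ge_atTop 2] with s hs
    exact inv_realZeta_mul_le_one_sub_Qpartial_div_realZeta n one_lt_two hs
  · filter_upwards [eventually_ge_atTop 2] with s hs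
    exact one_sub_Qpartial_div_realZeta_le n one_lt_two hs
end

section
/- For real s > 1, the squared complex modulus of ζ(σ + it) with σ = s and t real satisfies |ζ(σ+it)|² = (ζ(4σ)/ζ(2σ)) · ∏_{p prime} (1 - cos(t·log p)/cosh(σ·log p))^{-1}. -/
open Complex

lemma ofReal_realZeta {r : ℝ} (hr : 1 < r) : (realZeta r : ℂ) = riemannZeta r := by
  rw [zeta_eq_tsum_one_div_nat_add_one_cpow (by simpa using hr), realZeta, ofReal_tsum]
  congr 1 with n
  rw [one_div, ← cpow_neg, ofReal_cpow (by positivity)]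
  push_cast
  rfl

lemma realZeta_ne_zero {r : ℝ} (hr : 1 < r) : realZeta r ≠ 0 := by
  rw [← ofReal_ne_zero, ofReal_realZeta hr]
  exact riemannZeta_ne_zero_of_one_lt_re (by simpa using hr)

lemma realZeta_eulerProduct_hasProd {r : ℝ} (hr : 1 < r) :
    HasProd (fun p : Nat.Primes ↦ (1 - (p : ℝ) ^ (-r))⁻¹) (realZeta r) := by
  rw [← isUniformEmbedding_ofReal.isInducing.hasProd_iff (g := ofRealHom), ofRealHom_eq_coe,
    ofReal_realZeta hr]
  convert riemannZeta_eulerProduct_hasProd (s := r) (by simpa using hr) with p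
  simp [ofReal_cpow (Nat.cast_nonneg _)]

lemma sq_norm_one_sub_ofReal_cpow {a : ℝ} (ha : 0 < a) (σ t : ℝ) :
    ‖1 - (a : ℂ) ^ (-(σ + t * I))‖ ^ 2 =
      1 - 2 * a ^ (-σ) * Real.cos (t * Real.log a) + (a ^ (-σ)) ^ 2 := by
  set w : ℂ := -(σ * Real.log a : ℝ) + (-(t * Real.log a) : ℝ) * I
  have hz : (a : ℂ) ^ (-(σ + t * I)) = exp w := by
    rw [cpow_def_of_ne_zero (by exact_mod_cast ha.ne'), ← ofReal_log ha.le]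
    push_cast [w]
    ring_nf
  have hre : Real.exp w.re = a ^ (-σ) := by
    simp [w, Real.rpow_def_of_pos ha, mul_comm]
  have him : w.im = -(t * Real.log a) := by simp [w]
  rw [hz, Complex.sq_norm, normSq_apply]
  simp only [sub_re, sub_im, one_re, one_im, exp_re, exp_im, hre, him, Real.cos_neg, Real.sin_neg]
  linear_combination (a ^ (-σ)) ^ 2 * Real.sin_sq_add_cos_sq (t * Real.log a)

lemma cosh_mul_log_eq {a : ℝ} (ha : 0 < a) (σ : ℝ) :
    Real.cosh (σ * Real.log a) = ((a ^ (-σ))⁻¹ + a ^ (-σ)) / 2 := by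
  rw [Real.cosh_eq, Real.rpow_neg ha.le, inv_inv, Real.rpow_def_of_pos ha, Real.exp_neg, mul_comm]

lemma inv_one_sub_div_half_inv_add_eq {x c : ℝ} (hx : x ^ 2 ≠ 1) :
    (1 - c / ((x⁻¹ + x) / 2))⁻¹ = (1 - x ^ 4) * (1 - x ^ 2)⁻¹ * (1 - 2 * x * c + x ^ 2)⁻¹ := by
  have h1 : (1 - x ^ 4) * (1 - x ^ 2)⁻¹ = 1 + x ^ 2 := by
    rw [mul_inv_eq_iff_eq_mul₀ (sub_ne_zero.mpr (Ne.symm hx))]; ring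
  rcases eq_or_ne x 0 with rfl | hx0
  · simp
  rw [h1, ← div_eq_mul_inv, ← inv_div]
  field_simp
  ring

lemma inv_one_sub_cos_div_cosh_eq {a : ℝ} (ha : 1 < a) {σ : ℝ} (hσ : 0 < σ) (t : ℝ) :
    (1 - Real.cos (t * Real.log a) / Real.cosh (σ * Real.log a))⁻¹ =
      (1 - a ^ (-(4 * σ))) * (1 - a ^ (-(2 * σ)))⁻¹ * ‖(1 - (a : ℂ) ^ (-(σ + t * I)))⁻¹‖ ^ 2 := by
  have ha0 : 0 < a := by linarith
  have hx : (a ^ (-σ)) ^ 2 ≠ 1 :=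
    (pow_lt_one₀ (by positivity) (Real.rpow_lt_one_of_one_lt_of_neg ha (by linarith))
      two_ne_zero).ne
  have h4 : a ^ (-(4 * σ)) = (a ^ (-σ)) ^ 4 := by rw [← Real.rpow_mul_natCast ha0.le]; ring_nf
  have h2 : a ^ (-(2 * σ)) = (a ^ (-σ)) ^ 2 := by rw [← Real.rpow_mul_natCast ha0.le]; ring_nf
  rw [cosh_mul_log_eq ha0, norm_inv, inv_pow, sq_norm_one_sub_ofReal_cpow ha0, h4, h2,
    inv_one_sub_div_half_inv_add_eq hx]

theorem stmt7 (σ t : ℝ) (hσ : 1 < σ) :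
    ‖riemannZeta ((σ : ℂ) + (t : ℂ) * Complex.I)‖ ^ 2 =
      (realZeta (4 * σ) / realZeta (2 * σ)) *
        ∏' p : Nat.Primes,
          (1 - Real.cos (t * Real.log (p : ℕ)) / Real.cosh (σ * Real.log (p : ℕ)))⁻¹ := by
  have hζ := (riemannZeta_eulerProduct_hasProd (s := σ + t * I) (by simpa)).norm.pow 2
  have hζ₂ := realZeta_eulerProduct_hasProd (r := 2 * σ) (by linarith)
  have hζ₂ne := realZeta_ne_zero (r := 2 * σ) (by linarith)
  have hζ₄ne := realZeta_ne_zero (r := 4 * σ) (by linarith)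
  have hζ₄ := (realZeta_eulerProduct_hasProd (r := 4 * σ) (by linarith)).inv₀ hζ₄ne
  simp only [inv_inv] at hζ₄
  rw [tprod_congr fun p : Nat.Primes ↦ by
      simpa only [ofReal_natCast] using
        inv_one_sub_cos_div_cosh_eq (a := (p : ℕ)) (mod_cast p.2.one_lt) (by linarith : 0 < σ) t,
    ((hζ₄.mul hζ₂).mul hζ).tprod_eq]
  grind
end

section
/- Let (t_n) be a strictly increasing sequence of positive reals with t_n → ∞ such that Z(s) = Σ_{n≥1} t_n^{-s} converges for all real s > 1. Then for every n ≥ 0, the limit as real s → ∞ of (Z(s) - Σ_{k=1}^{n} t_k^{-s})^{-1/s} equals t_{n+1}. -/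
open Filter Topology

/-! Write `T(s)` for the tail `∑_{k ≥ n} t_k^{-s}`. It contains the term `t_n^{-s}`, and since
`t_k ≥ t_n` on the tail, `T(s) ≤ C t_n^{2-s}` with `C = ∑_{k ≥ n} t_k^{-2}`. Raising to the power
`-1/s` squeezes `T(s)^{-1/s}` between `C^{-1/s} t_n^{1-2/s}` and `t_n`, and the lower bound tends
to `t_n`. -/

namespace Real

lemma rpow_neg_le_rpow_neg_mul_rpow_sub {m x a s : ℝ} (hm : 0 < m) (hmx : m ≤ x) (has : a ≤ s) :
    x ^ (-s) ≤ x ^ (-a) * m ^ (a - s) := by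
  have hx : 0 < x := hm.trans_le hmx
  calc x ^ (-s) = x ^ (-a) * x ^ (a - s) := by rw [← rpow_add hx]; ring_nf
    _ ≤ x ^ (-a) * m ^ (a - s) :=
      mul_le_mul_of_nonneg_left (rpow_le_rpow_of_nonpos hm hmx (by linarith)) (rpow_nonneg hx.le _)

lemma tendsto_mul_rpow_sub_rpow_neg_one_div {C m : ℝ} (hC : 0 < C) (hm : 0 < m) (a : ℝ) :
    Tendsto (fun s : ℝ => (C * m ^ (a - s)) ^ (-1 / s)) atTop (𝓝 m) := by
  have hinv : Tendsto (fun s : ℝ => s⁻¹) atTop (𝓝 0) := tendsto_inv_atTop_zero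
  have hexp₀ : Tendsto (fun s : ℝ => -1 / s) atTop (𝓝 0) := by simpa [neg_div] using hinv.neg
  have hexp₁ : Tendsto (fun s : ℝ => 1 - a * s⁻¹) atTop (𝓝 1) := by
    simpa using tendsto_const_nhds.sub (hinv.const_mul a)
  have hC' : Tendsto (fun s : ℝ => C ^ (-1 / s)) atTop (𝓝 1) := by
    simpa using tendsto_const_nhds.rpow hexp₀ (.inl hC.ne')
  have hm' : Tendsto (fun s : ℝ => m ^ (1 - a * s⁻¹)) atTop (𝓝 m) := by
    simpa using tendsto_const_nhds.rpow hexp₁ (.inl hm.ne')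
  refine (by simpa using hC'.mul hm' : Tendsto _ _ (𝓝 m)).congr' ?_
  filter_upwards [eventually_ne_atTop 0] with s hs
  rw [mul_rpow hC.le (rpow_nonneg hm.le _), ← rpow_mul hm.le]
  congr 2
  field_simp
  ring

section DominatedByLeast

variable {ι : Type*} {u : ι → ℝ} {i₀ : ι} {a s : ℝ}

lemma summable_rpow_neg_of_le (hpos : 0 < u i₀) (hmin : ∀ i, u i₀ ≤ u i)
    (ha : Summable fun i => u i ^ (-a)) (has : a ≤ s) : Summable fun i => u i ^ (-s) :=
  (ha.mul_right (u i₀ ^ (a - s))).of_nonneg_of_le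
    (fun i => rpow_nonneg (hpos.trans_le (hmin i)).le _)
    (fun i => rpow_neg_le_rpow_neg_mul_rpow_sub hpos (hmin i) has)

lemma tsum_rpow_neg_le (hpos : 0 < u i₀) (hmin : ∀ i, u i₀ ≤ u i)
    (ha : Summable fun i => u i ^ (-a)) (has : a ≤ s) :
    ∑' i, u i ^ (-s) ≤ (∑' i, u i ^ (-a)) * u i₀ ^ (a - s) := by
  rw [← tsum_mul_right]
  exact (summable_rpow_neg_of_le hpos hmin ha has).tsum_le_tsum
    (fun i => rpow_neg_le_rpow_neg_mul_rpow_sub hpos (hmin i) has) (ha.mul_right _)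

theorem tendsto_tsum_rpow_neg_rpow_neg_one_div (hpos : 0 < u i₀) (hmin : ∀ i, u i₀ ≤ u i)
    (ha : Summable fun i => u i ^ (-a)) :
    Tendsto (fun s : ℝ => (∑' i, u i ^ (-s)) ^ (-1 / s)) atTop (𝓝 (u i₀)) := by
  have hC : 0 < ∑' i, u i ^ (-a) :=
    ha.tsum_pos (fun i => rpow_nonneg (hpos.trans_le (hmin i)).le _) i₀ (rpow_pos_of_pos hpos _)
  have hbounds : ∀ᶠ s in atTop,
      ((∑' i, u i ^ (-a)) * u i₀ ^ (a - s)) ^ (-1 / s) ≤ (∑' i, u i ^ (-s)) ^ (-1 / s) ∧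
        (∑' i, u i ^ (-s)) ^ (-1 / s) ≤ u i₀ := by
    filter_upwards [eventually_ge_atTop a, eventually_gt_atTop 0] with s has hs
    have hexp : -1 / s ≤ 0 := div_nonpos_of_nonpos_of_nonneg (by norm_num) hs.le
    have hlow : u i₀ ^ (-s) ≤ ∑' i, u i ^ (-s) :=
      (summable_rpow_neg_of_le hpos hmin ha has).le_tsum i₀
        (fun i _ => rpow_nonneg (hpos.trans_le (hmin i)).le _)
    refine ⟨rpow_le_rpow_of_nonpos ((rpow_pos_of_pos hpos _).trans_le hlow)
      (tsum_rpow_neg_le hpos hmin ha has) hexp, ?_⟩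
    calc (∑' i, u i ^ (-s)) ^ (-1 / s) ≤ (u i₀ ^ (-s)) ^ (-1 / s) :=
          rpow_le_rpow_of_nonpos (rpow_pos_of_pos hpos _) hlow hexp
      _ = u i₀ := by
        rw [← rpow_mul hpos.le, show -s * (-1 / s) = 1 by field_simp, rpow_one]
  exact tendsto_of_tendsto_of_tendsto_of_le_of_le' (tendsto_mul_rpow_sub_rpow_neg_one_div hC hpos a)
    tendsto_const_nhds (hbounds.mono fun _ h => h.1) (hbounds.mono fun _ h => h.2)

end DominatedByLeast

end Real

theorem stmt16_general (t : ℕ → ℝ) (hpos : ∀ n, 0 < t n) (hmono : StrictMono t)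
    (hsum : ∀ s : ℝ, 1 < s → Summable fun n : ℕ => t n ^ (-s)) (n : ℕ) :
    Tendsto
      (fun s : ℝ =>
        ((∑' k : ℕ, t k ^ (-s)) - ∑ k ∈ Finset.range n, t k ^ (-s)) ^ (-1 / s))
      atTop (𝓝 (t n)) := by
  have htail := Real.tendsto_tsum_rpow_neg_rpow_neg_one_div (u := fun k => t (k + n)) (i₀ := 0)
    (hpos _) (fun k => hmono.monotone (by omega)) ((summable_nat_add_iff n).mpr (hsum 2 one_lt_two))
  rw [zero_add] at htail
  refine htail.congr' ?_
  filter_upwards [eventually_gt_atTop 1] with s hs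
  rw [← (hsum s hs).sum_add_tsum_nat_add n, add_sub_cancel_left]

theorem stmt16 (t : ℕ → ℝ) (hpos : ∀ n, 0 < t n) (hmono : StrictMono t)
    (htop : Tendsto t atTop atTop)
    (hsum : ∀ s : ℝ, 1 < s → Summable fun n : ℕ => t n ^ (-s)) (n : ℕ) :
    Tendsto
      (fun s : ℝ =>
        ((∑' k : ℕ, t k ^ (-s)) - ∑ k ∈ Finset.range n, t k ^ (-s)) ^ (-1 / s))
      atTop (𝓝 (t n)) :=
  stmt16_general t hpos hmono hsum n
end

section
/- Let a_1 < a_2 < ... be a strictly increasing sequence of reals with a_1 > 1 and a_n → ∞, and suppose F(s) = ∏_{n≥1} (1 - a_n^{-s})^{-1} converges for real s > 1. Define Q_n(s) = ∏_{k=1}^{n} (1 - a_k^{-s})^{-1}. Then for every n ≥ 0, lim_{s→∞} (1 - Q_n(s)/F(s))^{-1/s} = a_{n+1}. -/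
/-!
Put `x_k = a_k ^ (-s)`. Then `Q_n(s) / F(s)` is the tail product `∏_{k ≥ n} (1 - x_k)`, and the
expansion `1 - ∏ (1 - x_k) = ∑_k x_k ∏_{j < k} (1 - x_j)` traps `1 - Q_n(s) / F(s)` between
`x_n` and `∑_{k ≥ n} x_k`. Multiplied by `a_n ^ s`, these bounds become `1` and
`∑_{k ≥ n} (a_n / a_k) ^ s`, which tends to `1` by dominated convergence, since every term with
`k > n` decays and is dominated by its value at `s = 2`. Hence `a_n ^ s (1 - Q_n(s) / F(s)) → 1`,
and raising to the power `-1 / s` leaves `a_n`.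
-/

open Filter Topology Finset

lemma hasSum_log_of_hasProd {ι : Type*} {f : ι → ℝ} {P : ℝ} (hf : ∀ i, f i ≠ 0) (hP : P ≠ 0)
    (h : HasProd f P) : HasSum (fun i => Real.log (f i)) (Real.log P) := by
  unfold HasSum
  simp_rw [← Real.log_prod fun i _ => hf i]
  exact (Real.continuousAt_log hP).tendsto.comp h

lemma summable_of_multipliable_one_sub_inv {ι : Type*} {x : ι → ℝ} (hx0 : ∀ i, 0 ≤ x i)
    (hx1 : ∀ i, x i < 1) (h : Multipliable fun i => (1 - x i)⁻¹) : Summable x := by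
  have hf : ∀ i, 1 ≤ (1 - x i)⁻¹ := fun i =>
    (one_le_inv₀ (by linarith [hx1 i])).2 (by linarith [hx0 i])
  have hP : 1 ≤ ∏' i, (1 - x i)⁻¹ :=
    ge_of_tendsto' h.hasProd fun s => one_le_prod fun i _ => hf i
  refine (hasSum_log_of_hasProd (fun i => by linarith [hf i]) (by linarith)
    h.hasProd).summable.of_nonneg_of_le hx0 fun i => ?_
  rw [Real.log_inv, le_neg]
  linarith [Real.log_le_sub_one_of_pos (sub_pos.2 (hx1 i))]

lemma one_sub_tprod_one_sub_mem_Icc {x : ℕ → ℝ} (hx0 : ∀ k, 0 ≤ x k) (hx1 : ∀ k, x k ≤ 1)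
    (hx : Summable x) : 1 - ∏' k, (1 - x k) ∈ Set.Icc (x 0) (∑' k, x k) := by
  set y := fun k => x k * ∏ j ∈ Iio k, (1 - x j) with hy
  have hy0 : ∀ k, 0 ≤ y k := fun k =>
    mul_nonneg (hx0 k) (prod_nonneg fun j _ => sub_nonneg.2 (hx1 j))
  have hyx : ∀ k, y k ≤ x k := fun k =>
    mul_le_of_le_one_right (hx0 k) (prod_le_one (fun j _ => sub_nonneg.2 (hx1 j))
      fun j _ => sub_le_self _ (hx0 j))
  have hys : Summable y := hx.of_nonneg_of_le hy0 hyx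
  have hm : Multipliable fun k => 1 - x k := by
    simpa only [sub_eq_add_neg] using Real.multipliable_one_add_of_summable hx.neg
  rw [tprod_one_sub_ordered hys hm, sub_sub_cancel]
  refine ⟨?_, hys.tsum_le_tsum hyx hx⟩
  simpa [hy] using hys.le_tsum 0 fun k _ => hy0 k

lemma prod_range_inv_div_tprod_inv_one_sub {x : ℕ → ℝ} (hx1 : ∀ k, x k ≠ 1)
    (hx : Summable x) (n : ℕ) :
    (∏ k ∈ range n, (1 - x k)⁻¹) / ∏' k, (1 - x k)⁻¹ = ∏' k, (1 - x (k + n)) := by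
  have hne : ∀ k, 1 - x k ≠ 0 := fun k => sub_ne_zero.2 (hx1 k).symm
  have hm : Multipliable fun k => 1 - x k := by
    simpa only [sub_eq_add_neg] using Real.multipliable_one_add_of_summable hx.neg
  have hm' : Multipliable fun k => 1 - x (k + n) := by
    simpa only [sub_eq_add_neg] using
      Real.multipliable_one_add_of_summable ((summable_nat_add_iff n).2 hx).neg
  have hP : ∏' k, (1 - x k) ≠ 0 := by
    have := tprod_one_add_ne_zero_of_summable (f := fun k => -x k)
      (fun k => by rw [← sub_eq_add_neg]; exact hne k) hx.neg.norm
    simpa only [← sub_eq_add_neg] using this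
  rw [hm.tprod_inv₀ hP, ← Multipliable.prod_mul_tprod_nat_mul' (f := fun k => 1 - x k) hm',
    prod_inv_distrib, div_inv_eq_mul, inv_mul_cancel_left₀ (prod_ne_zero_iff.2 fun k _ => hne k)]

lemma rpow_mul_rpow_neg_eq_div_rpow {x y : ℝ} (hx : 0 ≤ x) (hy : 0 ≤ y) (s : ℝ) :
    x ^ s * y ^ (-s) = (x / y) ^ s := by
  rw [Real.div_rpow hx hy, Real.rpow_neg hy, div_eq_mul_inv]

lemma rpow_mul_one_sub_tprod_one_sub_rpow_neg_mem_Icc {a : ℕ → ℝ} (ha : ∀ k, 1 < a k) {s : ℝ}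
    (hs : 0 < s) (hsum : Summable fun k => a k ^ (-s)) :
    a 0 ^ s * (1 - ∏' k, (1 - a k ^ (-s))) ∈ Set.Icc 1 (∑' k, (a 0 / a k) ^ s) := by
  have hpos : ∀ k, 0 < a k := fun k => zero_lt_one.trans (ha k)
  obtain ⟨hlo, hup⟩ := one_sub_tprod_one_sub_mem_Icc (fun k => (Real.rpow_pos_of_pos (hpos k) _).le)
    (fun k => (Real.rpow_lt_one_of_one_lt_of_neg (ha k) (neg_neg_of_pos hs)).le) hsum
  have ha0 : 0 ≤ a 0 ^ s := Real.rpow_nonneg (hpos 0).le s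
  constructor
  · calc (1 : ℝ) = a 0 ^ s * a 0 ^ (-s) := by
          rw [rpow_mul_rpow_neg_eq_div_rpow (hpos 0).le (hpos 0).le, div_self (hpos 0).ne',
            Real.one_rpow]
      _ ≤ _ := mul_le_mul_of_nonneg_left hlo ha0
  · calc _ ≤ a 0 ^ s * ∑' k, a k ^ (-s) := mul_le_mul_of_nonneg_left hup ha0
      _ = _ := by
        simp only [← tsum_mul_left, rpow_mul_rpow_neg_eq_div_rpow (hpos 0).le (hpos _).le]

lemma tendsto_tsum_rpow_atTop {ι : Type*} {r : ι → ℝ} {i₀ : ι} (hr : ∀ i, 0 < r i)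
    (hr₀ : r i₀ = 1) (hr_lt : ∀ i ≠ i₀, r i < 1) {s₀ : ℝ} (hs₀ : Summable fun i => r i ^ s₀) :
    Tendsto (fun s : ℝ => ∑' i, r i ^ s) atTop (𝓝 1) := by
  classical
  have hr_le : ∀ i, r i ≤ 1 := fun i => by
    rcases eq_or_ne i i₀ with rfl | h
    exacts [hr₀.le, (hr_lt i h).le]
  have hlim : ∀ i, Tendsto (fun s : ℝ => r i ^ s) atTop (𝓝 (if i = i₀ then 1 else 0)) :=
    fun i => by
      split_ifs with h
      · simp [h, hr₀]
      · exact tendsto_rpow_atTop_of_base_lt_one _ (by linarith [hr i]) (hr_lt i h)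
  have hbound : ∀ᶠ s : ℝ in atTop, ∀ i, ‖r i ^ s‖ ≤ r i ^ s₀ := by
    filter_upwards [eventually_ge_atTop s₀] with s hs i
    rw [Real.norm_of_nonneg (Real.rpow_nonneg (hr i).le s)]
    exact Real.rpow_le_rpow_of_exponent_ge (hr i) (hr_le i) hs
  simpa using tendsto_tsum_of_dominated_convergence hs₀ hlim hbound

lemma tendsto_rpow_neg_one_div_of_tendsto_rpow_mul {g : ℝ → ℝ} {b c : ℝ} (hb : 0 < b)
    (hc : 0 < c) (h : Tendsto (fun s => b ^ s * g s) atTop (𝓝 c)) :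
    Tendsto (fun s => g s ^ (-1 / s)) atTop (𝓝 b) := by
  have hexp : Tendsto (fun s : ℝ => -1 / s) atTop (𝓝 0) :=
    tendsto_const_nhds.div_atTop tendsto_id
  have hlim := (h.rpow hexp (Or.inl hc.ne')).const_mul b
  rw [Real.rpow_zero, mul_one] at hlim
  refine hlim.congr' ?_
  filter_upwards [h.eventually (lt_mem_nhds hc), eventually_gt_atTop 0] with s hpos hs
  have hbs : 0 < b ^ s := Real.rpow_pos_of_pos hb s
  rw [Real.mul_rpow hbs.le (pos_of_mul_pos_right hpos hbs.le).le, ← Real.rpow_mul hb.le,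
    show s * (-1 / s) = -1 by field_simp, Real.rpow_neg_one, mul_inv_cancel_left₀ hb.ne']

theorem stmt17_general (a : ℕ → ℝ) (h1 : 1 < a 0) (hmono : StrictMono a)
    (hprod : ∀ s : ℝ, 1 < s → Multipliable fun n : ℕ => (1 - a n ^ (-s))⁻¹) (n : ℕ) :
    Tendsto
      (fun s : ℝ =>
        (1 - (∏ k ∈ Finset.range n, (1 - a k ^ (-s))⁻¹) /
            (∏' k : ℕ, (1 - a k ^ (-s))⁻¹)) ^ (-1 / s))
      atTop (𝓝 (a n)) := by
  have ha : ∀ k, 1 < a k := fun k => h1.trans_le (hmono.monotone k.zero_le)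
  have hpos : ∀ k, 0 < a k := fun k => zero_lt_one.trans (ha k)
  have hx1 : ∀ s : ℝ, 0 < s → ∀ k, a k ^ (-s) < 1 := fun s hs k =>
    Real.rpow_lt_one_of_one_lt_of_neg (ha k) (neg_neg_of_pos hs)
  have hsum : ∀ s : ℝ, 1 < s → Summable fun k => a k ^ (-s) := fun s hs =>
    summable_of_multipliable_one_sub_inv (fun k => (Real.rpow_pos_of_pos (hpos k) _).le)
      (hx1 s (by linarith)) (hprod s hs)
  have htail : Tendsto (fun s : ℝ => ∑' k, (a n / a (k + n)) ^ s) atTop (𝓝 1) := by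
    refine tendsto_tsum_rpow_atTop (i₀ := 0) (s₀ := 2) (fun k => div_pos (hpos n) (hpos _))
      (by simp [(hpos n).ne']) (fun k hk => (div_lt_one (hpos _)).2 (hmono (by omega))) ?_
    simpa only [rpow_mul_rpow_neg_eq_div_rpow (hpos _).le (hpos _).le] using
      ((summable_nat_add_iff n).2 (hsum 2 one_lt_two)).mul_left (a n ^ (2 : ℝ))
  have hbounds : ∀ᶠ s : ℝ in atTop,
      a n ^ s * (1 - (∏ k ∈ range n, (1 - a k ^ (-s))⁻¹) / ∏' k, (1 - a k ^ (-s))⁻¹) ∈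
        Set.Icc 1 (∑' k, (a n / a (k + n)) ^ s) := by
    filter_upwards [eventually_gt_atTop 1] with s hs
    rw [prod_range_inv_div_tprod_inv_one_sub (fun k => (hx1 s (by linarith) k).ne) (hsum s hs)]
    simpa only [zero_add] using rpow_mul_one_sub_tprod_one_sub_rpow_neg_mem_Icc
      (a := fun k => a (k + n)) (fun k => ha _) (by linarith)
      ((summable_nat_add_iff n).2 (hsum s hs))
  exact tendsto_rpow_neg_one_div_of_tendsto_rpow_mul (hpos n) one_pos
    (tendsto_of_tendsto_of_tendsto_of_le_of_le' tendsto_const_nhds htail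
      (hbounds.mono fun _ h => h.1) (hbounds.mono fun _ h => h.2))

theorem stmt17 (a : ℕ → ℝ) (h1 : 1 < a 0) (hmono : StrictMono a)
    (htop : Tendsto a atTop atTop)
    (hprod : ∀ s : ℝ, 1 < s → Multipliable fun n : ℕ => (1 - a n ^ (-s))⁻¹) (n : ℕ) :
    Tendsto
      (fun s : ℝ =>
        (1 - (∏ k ∈ Finset.range n, (1 - a k ^ (-s))⁻¹) /
            (∏' k : ℕ, (1 - a k ^ (-s))⁻¹)) ^ (-1 / s))
      atTop (𝓝 (a n)) :=
  stmt17_general a h1 hmono hprod n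
end
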